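/- arXiv:2001.09195 — 2 statements merged into one kernel-verified Lean document; each statement's English description precedes it below -/
import Mathlib

section
/- Let X and Y be compact Hausdorff spaces. The map sending a continuous function f : X → Y to the unital star-algebra homomorphism C(Y, ℂ) → C(X, ℂ) given by g ↦ g ∘ f is a bijection between the set of continuous maps X → Y and the set of unital star-algebra homomorphisms C(Y, ℂ) → C(X, ℂ). (That is, the contravariant functor C(−, ℂ) from compact Hausdorff spaces to commutative C*-algebras is full and faithful.) -/
/-!
A compact Hausdorff space `Y` is recovered from `C(Y, 𝕜)` as its character space, via the
homeomorphism `homeoEval` sending a point to evaluation at it. A star-algebra homomorphism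
`φ : C(Y, 𝕜) →⋆ₐ[𝕜] C(X, 𝕜)` therefore induces a continuous map `X → Y` by pulling characters
back along `φ`; this is inverse to `f ↦ (g ↦ g ∘ f)` by naturality of `homeoEval`.
-/

open WeakDual CharacterSpace

section

variable {X Y 𝕜 : Type*} [RCLike 𝕜]
  [TopologicalSpace X] [CompactSpace X] [T2Space X]
  [TopologicalSpace Y] [CompactSpace Y] [T2Space Y]

theorem WeakDual.CharacterSpace.apply_homeoEval_symm (χ : characterSpace 𝕜 C(Y, 𝕜))
    (g : C(Y, 𝕜)) : g ((homeoEval Y 𝕜).symm χ) = χ g :=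
  congr($((homeoEval Y 𝕜).apply_symm_apply χ) g)

namespace StarAlgHom

noncomputable def dualContinuousMap (φ : C(Y, 𝕜) →⋆ₐ[𝕜] C(X, 𝕜)) : C(X, Y) :=
  ((homeoEval Y 𝕜).symm : C(_, Y)).comp ((compContinuousMap φ).comp (homeoEval X 𝕜 : C(X, _)))

theorem apply_dualContinuousMap (φ : C(Y, 𝕜) →⋆ₐ[𝕜] C(X, 𝕜)) (g : C(Y, 𝕜)) (x : X) :
    g (φ.dualContinuousMap x) = φ g x :=
  apply_homeoEval_symm _ g

theorem compStarAlgHom'_dualContinuousMap (φ : C(Y, 𝕜) →⋆ₐ[𝕜] C(X, 𝕜)) :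
    φ.dualContinuousMap.compStarAlgHom' 𝕜 𝕜 = φ := by
  ext g x
  exact apply_dualContinuousMap φ g x

end StarAlgHom

theorem ContinuousMap.dualContinuousMap_compStarAlgHom' (f : C(X, Y)) :
    (f.compStarAlgHom' 𝕜 𝕜).dualContinuousMap = f := by
  rw [StarAlgHom.dualContinuousMap, ← homeoEval_naturality, ← ContinuousMap.comp_assoc]
  ext x
  exact (homeoEval Y 𝕜).symm_apply_apply (f x)

noncomputable def ContinuousMap.compStarAlgHomEquiv : C(X, Y) ≃ (C(Y, 𝕜) →⋆ₐ[𝕜] C(X, 𝕜)) where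
  toFun f := f.compStarAlgHom' 𝕜 𝕜
  invFun φ := φ.dualContinuousMap
  left_inv := ContinuousMap.dualContinuousMap_compStarAlgHom'
  right_inv := StarAlgHom.compStarAlgHom'_dualContinuousMap

end

/-- **Full faithfulness of `C(−, ℂ)`.** For compact Hausdorff spaces `X` and `Y`, the map
sending a continuous function `f : X → Y` to the unital star-algebra homomorphism
`C(Y, ℂ) →⋆ₐ[ℂ] C(X, ℂ)` given by `g ↦ g ∘ f` is a bijection between the continuous maps
`X → Y` and the unital star-algebra homomorphisms `C(Y, ℂ) →⋆ₐ[ℂ] C(X, ℂ)`. -/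
theorem compStarAlgHom_bijective
    (X Y : Type*) [TopologicalSpace X] [CompactSpace X] [T2Space X]
    [TopologicalSpace Y] [CompactSpace Y] [T2Space Y] :
    Function.Bijective
      (fun f : C(X, Y) => ContinuousMap.compStarAlgHom' ℂ ℂ f) :=
  (ContinuousMap.compStarAlgHomEquiv (𝕜 := ℂ)).bijective
end

section
/- Let B be a Boolean algebra. The map sending b ∈ B to the set { f | f(b) = ⊤ } of bounded lattice homomorphisms f : B → Bool (where Bool is the two-element Boolean algebra) is an injective map from B into the powerset of the set of all bounded lattice homomorphisms B → Bool, and it preserves ⊤, ⊥, finite joins, finite meets, and complements. Hence every Boolean algebra embeds into a powerset Boolean algebra. -/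
/-!
Every prime ideal `I` of a bounded lattice yields a homomorphism to `Bool`, namely the indicator
of the complement of `I`. If `a ≰ b`, the principal filter of `a` and the principal ideal of `b`
are disjoint, so the prime ideal theorem separates them by a prime ideal; the resulting
homomorphism sends `a` to `⊤` and `b` to `⊥`. Hence `b ↦ V b` reflects the order and is
injective, while preservation of the Boolean operations is pointwise just the fact that each
`f` is a homomorphism into `Bool`.
-/

namespace Order.Ideal

variable {α : Type*} [Lattice α]

theorem IsPrime.inf_mem_iff {I : Ideal α} (hI : I.IsPrime) {x y : α} :
    x ⊓ y ∈ I ↔ x ∈ I ∨ y ∈ I :=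
  ⟨hI.mem_or_mem, fun h => h.elim (I.lower inf_le_left) (I.lower inf_le_right)⟩

open Classical in
noncomputable def IsPrime.toBoolHom [BoundedOrder α] {I : Ideal α} (hI : I.IsPrime) :
    BoundedLatticeHom α Bool where
  toFun x := decide (x ∉ I)
  map_sup' x y := by simp [sup_mem_iff]
  map_inf' x y := by simp [hI.inf_mem_iff, not_or]
  map_top' := by simp [hI.toIsProper.top_notMem]
  map_bot' := by simp [I.bot_mem]

open Classical in
theorem IsPrime.toBoolHom_apply [BoundedOrder α] {I : Ideal α} (hI : I.IsPrime) (x : α) :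
    hI.toBoolHom x = decide (x ∉ I) :=
  rfl

end Order.Ideal

open Order in
theorem DistribLattice.exists_boundedLatticeHom_bool_of_not_le {α : Type*} [DistribLattice α]
    [BoundedOrder α] {a b : α} (hab : ¬ a ≤ b) :
    ∃ f : BoundedLatticeHom α Bool, f a = true ∧ f b = false := by
  have hdisj : Disjoint (PFilter.principal a : Set α) (Ideal.principal b : Set α) :=
    Set.disjoint_left.mpr fun x hax hxb => hab ((PFilter.mem_principal.mp hax).trans hxb)
  obtain ⟨J, hJ, hbJ, haJ⟩ := DistribLattice.prime_ideal_of_disjoint_filter_ideal hdisj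
  refine ⟨hJ.toBoolHom, ?_, ?_⟩
  · simpa [Ideal.IsPrime.toBoolHom_apply] using
      Set.disjoint_left.mp haJ (PFilter.mem_principal.mpr le_rfl)
  · simpa [Ideal.IsPrime.toBoolHom_apply] using hbJ Ideal.mem_principal_self

theorem DistribLattice.le_iff_forall_boundedLatticeHom_bool {α : Type*} [DistribLattice α]
    [BoundedOrder α] {a b : α} : a ≤ b ↔ ∀ f : BoundedLatticeHom α Bool, f a ≤ f b := by
  refine ⟨fun hab f => OrderHomClass.mono f hab, fun h => ?_⟩
  by_contra hab
  obtain ⟨f, hfa, hfb⟩ := exists_boundedLatticeHom_bool_of_not_le hab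
  exact absurd (h f) (by rw [hfa, hfb]; decide)

/-- **Stone representation theorem.** For a Boolean algebra `B`, the map sending `b ∈ B` to
the set `{ f | f b = ⊤ }` of bounded lattice homomorphisms `f : B → Bool` is an injection
of `B` into the powerset of the set of bounded lattice homomorphisms `B → Bool`, and it
preserves `⊤`, `⊥`, finite joins, finite meets, and complements.  Hence every Boolean
algebra embeds into a powerset Boolean algebra. -/
theorem stone_representation
    (B : Type*) [BooleanAlgebra B]
    (V : B → Set (BoundedLatticeHom B Bool))
    (hV : ∀ (b : B) (f : BoundedLatticeHom B Bool), f ∈ V b ↔ f b = ⊤) :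
    Function.Injective V ∧
      V ⊤ = Set.univ ∧
      V ⊥ = ∅ ∧
      (∀ a b : B, V (a ⊔ b) = V a ∪ V b) ∧
      (∀ a b : B, V (a ⊓ b) = V a ∩ V b) ∧
      (∀ a : B, V aᶜ = (V a)ᶜ) := by
  obtain rfl : V = fun b => {f | f b = true} := funext fun b => Set.ext (hV b)
  refine ⟨fun a b hab => ?_, ?_, ?_, fun a b => ?_, fun a b => ?_, fun a => ?_⟩
  · have hle : ∀ {a b : B}, {f : BoundedLatticeHom B Bool | f a = true} ⊆ {f | f b = true} →
        a ≤ b := fun h =>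
      DistribLattice.le_iff_forall_boundedLatticeHom_bool.mpr fun f => Bool.le_iff_imp.mpr (@h f)
    exact le_antisymm (hle hab.le) (hle hab.ge)
  all_goals ext f; simp
end
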